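/- Let R be a finite commutative ring with identity with |R| = q, let D ⊆ R with |D| = m, let f(x) ∈ R[x], let b ∈ R, and let 0 ≤ k ≤ m. Then, as an identity of complex numbers, k! · N_f(D,k,b) = (1/q)·(m)_k + (1/q)·∑_{ψ ≠ ψ_0} ψ(-b) · ∑_{τ ∈ S_k} sign(τ) · ∏_{i=1}^{k} (∑_{a ∈ D} ψ(i·f(a)))^{c_i(τ)}, where the outer sum is over all nontrivial additive characters ψ of (R,+) (ψ_0 being the trivial character), c_i(τ) is the number of cycles of length i of τ (fixed points counted as 1-cycles), and ψ(i·x) denotes ψ applied to the i-fold sum x + ⋯ + x. -/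

import Mathlib

open Finset

/-- The number of cycles of length `i` of a permutation `τ ∈ S_k`
(fixed points counted as `1`-cycles). -/
def cycleCount {k : ℕ} (τ : Equiv.Perm (Fin k)) (i : ℕ) : ℕ :=
  if i = 1 then (Finset.univ.filter fun x => τ x = x).card
  else Multiset.count i τ.cycleType

/-- `N_f(D, k, b)`: the number of `k`-element subsets `S ⊆ D` with `∑_{x ∈ S} f(x) = b`. -/
def polySubsetSumCount {R : Type*} [CommRing R] [DecidableEq R]
    (D : Finset R) (f : Polynomial R) (k : ℕ) (b : R) : ℕ :=
  ((D.powersetCard k).filter (fun S => ∑ x ∈ S, f.eval x = b)).card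

open scoped Nat

/-!
Ordering the elements of a `k`-subset shows that `k! · N_f(D,k,b)` counts the injections
`g : Fin k ↪ D` with `∑ i, f (g i) = b`, and orthogonality of the characters of `(R, +)` turns this
count into `q⁻¹ ∑_ψ ψ(-b) ∑_g ∏_i ψ(f(g i))`. The trivial character contributes `(m)_k`.
For the others, write the sum over injections of `∏_i w(g i)` as
`∑_τ sign τ ∑_{g ∘ τ = g} ∏_i w(g i)`: this weights every `g` by `∑_{τ ∈ Stab g} sign τ`, which
is `1` for injective `g` and `0` otherwise (a transposition of two points where `g` agrees pairs off
the stabilizer with opposite signs). A function constant on the cycles of `τ` is a free choice of a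
value on each cycle, so `∑_{g ∘ τ = g} ∏_i w(g i) = ∏_{cycles c} ∑_a w(a)^{|c|}`, and grouping
the cycles by length gives the power sums `∑_a ψ(i • f(a))` raised to `c_i(τ)`.
-/

namespace Equiv.Perm

variable {ι α : Type*}

lemma sameCycle_out_mk (τ : Perm ι) (x : ι) :
    τ.SameCycle (Quotient.mk (SameCycle.setoid τ) x).out x :=
  Quotient.mk_out (s := SameCycle.setoid τ) x

lemma SameCycle.apply_eq_of_comp_eq_self [Finite ι] {τ : Perm ι} {g : ι → α} (hg : g ∘ τ = g)
    {x y : ι} (h : τ.SameCycle x y) : g x = g y := by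
  obtain ⟨n, rfl⟩ := h.exists_nat_pow_eq
  clear h
  induction n with
  | zero => rfl
  | succ n ih => rw [ih, pow_succ', mul_apply]; exact (congrFun hg _).symm

theorem sum_sign_filter_comp_eq_self [Fintype ι] [DecidableEq ι] [DecidableEq α] (g : ι → α) :
    ∑ τ ∈ univ.filter (fun τ : Perm ι => g ∘ τ = g), (sign τ : ℤ)
      = if Function.Injective g then 1 else 0 := by
  split_ifs with hg
  · have : univ.filter (fun τ : Perm ι => g ∘ τ = g) = {1} := by
      ext τ
      simp only [mem_filter, mem_univ, true_and, mem_singleton]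
      exact ⟨fun h => Equiv.ext fun x => hg (congrFun h x), fun h => h ▸ rfl⟩
    simp [this]
  · obtain ⟨i, j, hgij, hij⟩ := Function.not_injective_iff.1 hg
    have hswap : g ∘ swap i j = g := by
      funext x
      rw [Function.comp_apply, swap_apply_def]
      split_ifs <;> simp_all
    refine sum_involution (fun τ _ => swap i j * τ) (fun τ _ => ?_) (fun τ _ _ => ?_)
      (fun τ hτ => ?_) (fun τ _ => swap_mul_self_mul i j τ)
    · simp [sign_mul, sign_swap hij]
    · rw [Ne, mul_eq_right, swap_eq_one_iff]
      exact hij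
    · simp only [mem_filter, mem_univ, true_and] at hτ ⊢
      rw [coe_mul, ← Function.comp_assoc, hswap, hτ]

section Partition

variable [Fintype ι] [DecidableEq ι]

-- `Quotient.fintype` asks for decidability of `≈`, which instance search does not unfold.
instance (τ : Perm ι) : DecidableRel (SameCycle.setoid τ).r := instDecidableRelSameCycle τ

def cycleClass (τ : Perm ι) (q : Quotient (SameCycle.setoid τ)) : Finset ι :=
  {x | Quotient.mk _ x = q}

variable (τ : Perm ι)

lemma mem_cycleClass_mk {x y : ι} :
    y ∈ τ.cycleClass (Quotient.mk _ x) ↔ τ.SameCycle x y := by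
  rw [cycleClass, mem_filter, Quotient.eq]
  exact ⟨fun h => h.2.symm, fun h => ⟨mem_univ y, h.symm⟩⟩

lemma cycleClass_mk_of_mem_support {x : ι} (hx : x ∈ τ.support) :
    τ.cycleClass (Quotient.mk _ x) = (τ.cycleOf x).support := by
  ext y
  rw [mem_cycleClass_mk, mem_support_cycleOf_iff]
  exact (and_iff_left hx).symm

lemma cycleClass_mk_of_apply_eq {x : ι} (hx : τ x = x) :
    τ.cycleClass (Quotient.mk _ x) = {x} := by
  ext y
  rw [mem_cycleClass_mk, mem_singleton]
  exact ⟨fun h => (h.eq_of_left hx).symm, fun h => h ▸ SameCycle.refl τ x⟩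

theorem univ_val_map_card_cycleClass :
    (univ : Finset (Quotient (SameCycle.setoid τ))).val.map (fun q => #(τ.cycleClass q))
      = τ.partition.parts := by
  have hout (q : Quotient (SameCycle.setoid τ)) : Quotient.mk _ q.out = q := q.out_eq
  rw [← Multiset.filter_add_not (fun q : Quotient (SameCycle.setoid τ) => q.out ∈ τ.support)
    univ.val, Multiset.map_add, parts_partition, cycleType_def]
  -- Classes meeting the support are the supports of the cycle factors; the others are singletons.
  congr 1
  · refine Multiset.map_eq_map_of_bij_of_nodup _ _ (univ.nodup.filter _)
      (τ.cycleFactorsFinset.nodup) (fun q _ => τ.cycleOf q.out) ?_ ?_ ?_ ?_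
    · intro q hq
      exact cycleOf_mem_cycleFactorsFinset_iff.2 (Multiset.mem_filter.1 hq).2
    · intro q _ q' hq' h
      have h' : q'.out ∈ (τ.cycleOf q.out).support :=
        h ▸ mem_support_cycleOf_iff.2 ⟨.refl _ _, (Multiset.mem_filter.1 hq').2⟩
      rw [← hout q, ← hout q']
      exact Quotient.sound (mem_support_cycleOf_iff.1 h').1
    · intro c hc
      obtain ⟨a, ha⟩ := (mem_cycleFactorsFinset_iff.1 hc).1.nonempty_support
      have hsame := sameCycle_out_mk τ a
      refine ⟨Quotient.mk _ a, Multiset.mem_filter.2 ⟨mem_univ _, ?_⟩, ?_⟩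
      · exact hsame.mem_support_iff.2 (mem_cycleFactorsFinset_support_le hc ha)
      · rw [hsame.cycleOf_eq, ← cycle_is_cycleOf ha hc]
    · intro q hq
      rw [Function.comp_apply, ← cycleClass_mk_of_mem_support τ (Multiset.mem_filter.1 hq).2, hout]
  · refine Multiset.eq_replicate.2 ⟨?_, ?_⟩
    · rw [Multiset.card_map, ← filter_val, card_val, ← card_compl]
      refine card_nbij' (·.out) (Quotient.mk _) (fun q hq => ?_) (fun x hx => ?_)
        (fun q _ => hout q) (fun x hx => ?_)
      · simpa using hq
      · simpa using (sameCycle_out_mk τ x).mem_support_iff.not.2 (by simpa using hx)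
      · exact (sameCycle_out_mk τ x).eq_of_right (notMem_support.1 (mem_compl.1 hx))
    · simp only [Multiset.mem_map, Multiset.mem_filter]
      rintro _ ⟨q, ⟨-, hq⟩, rfl⟩
      rw [← hout q, cycleClass_mk_of_apply_eq τ (notMem_support.1 hq), card_singleton]

variable [Fintype α] [DecidableEq α] {R : Type*}

theorem prod_map_parts_partition_eq_sum_comp_eq_self [CommSemiring R] (w : α → R) :
    (τ.partition.parts.map fun n => ∑ a, w a ^ n).prod
      = ∑ g ∈ univ.filter (fun g : ι → α => g ∘ τ = g), ∏ i, w (g i) := by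
  rw [← univ_val_map_card_cycleClass, Multiset.map_map, ← prod_eq_multiset_prod]
  simp only [Function.comp_apply, Fintype.prod_sum]
  symm
  refine sum_nbij' (fun g q => g q.out) (fun h x => h (Quotient.mk _ x)) (by simp)
    (fun h _ => ?_) (fun g hg => ?_) (fun h _ => ?_) (fun g hg => ?_)
  · simp only [mem_filter, mem_univ, true_and]
    exact funext fun x => congrArg h (Quotient.sound (SameCycle.refl τ x).apply_left)
  · funext x
    exact SameCycle.apply_eq_of_comp_eq_self (by simpa using hg) (sameCycle_out_mk τ x)
  · funext q
    exact congrArg h q.out_eq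
  · rw [← prod_fiberwise univ (Quotient.mk (SameCycle.setoid τ))]
    refine prod_congr rfl fun q _ => ?_
    rw [← prod_const]
    refine prod_congr rfl fun x hx => congrArg w ?_
    obtain rfl := (mem_filter.1 hx).2
    exact SameCycle.apply_eq_of_comp_eq_self (mem_filter.1 hg).2 (sameCycle_out_mk τ x).symm

theorem sum_sign_mul_prod_map_parts_partition_eq_sum_embedding [CommRing R] (w : α → R) :
    ∑ τ : Perm ι, (sign τ : R) * (τ.partition.parts.map fun n => ∑ a, w a ^ n).prod
      = ∑ g : ι ↪ α, ∏ i, w (g i) := by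
  simp_rw [prod_map_parts_partition_eq_sum_comp_eq_self, mul_sum]
  rw [sum_comm' (t' := univ) (s' := fun g => univ.filter (fun τ : Perm ι => g ∘ τ = g)) (by simp)]
  have hsign (g : ι → α) : ∑ τ ∈ univ.filter (fun τ : Perm ι => g ∘ τ = g), (sign τ : R)
      = if Function.Injective g then 1 else 0 := by
    exact_mod_cast congrArg (Int.cast : ℤ → R) (sum_sign_filter_comp_eq_self g)
  simp_rw [← sum_mul, hsign, ite_mul, one_mul, zero_mul, ← sum_filter]
  rw [sum_subtype _ (p := Function.Injective) (fun g => by simp)]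
  exact Fintype.sum_equiv (Equiv.subtypeInjectiveEquivEmbedding ι α) _ _ fun _ => rfl

end Partition

end Equiv.Perm

section CycleCount

open Equiv Perm

variable {k : ℕ} (τ : Perm (Fin k))

theorem cycleCount_eq_count_parts_partition {i : ℕ} (hi : 1 ≤ i) :
    cycleCount τ i = τ.partition.parts.count i := by
  rw [cycleCount, parts_partition, Multiset.count_add, Multiset.count_replicate]
  split_ifs with h h' h'
  · subst h
    have hfix : #{x | τ x = x} + #τ.support = k := by
      simpa [support] using card_filter_add_card_filter_not (s := univ) (fun x => τ x = x)
    rw [Multiset.count_eq_zero.2 fun h => (one_lt_of_mem_cycleType h).ne' rfl, Fintype.card_fin]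
    omega
  · omega
  · omega
  · rw [add_zero]

theorem prod_Icc_pow_cycleCount {M : Type*} [CommMonoid M] (p : ℕ → M) :
    ∏ i ∈ Icc 1 k, p i ^ cycleCount τ i = (τ.partition.parts.map p).prod := by
  rw [prod_multiset_map_count]
  symm
  refine prod_subset (fun i hi => ?_) (fun i _ hi => ?_) |>.trans
    (prod_congr rfl fun i hi => ?_)
  · rw [Multiset.mem_toFinset] at hi
    exact mem_Icc.2 ⟨τ.partition.parts_pos hi, by simpa using Nat.Partition.le_of_mem_parts hi⟩
  · rw [Multiset.count_eq_zero.2 (Multiset.mem_toFinset.not.1 hi), pow_zero]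
  · rw [cycleCount_eq_count_parts_partition τ (mem_Icc.1 hi).1]

end CycleCount

open Equiv Perm in
theorem sum_embedding_prod_eq_sum_sign_mul_prod_cycleCount {β R : Type*} [DecidableEq β]
    [CommRing R] (D : Finset β) (w : β → R) (k : ℕ) :
    ∑ g : Fin k ↪ D, ∏ i, w (g i)
      = ∑ τ : Perm (Fin k), (sign τ : R) * ∏ i ∈ Icc 1 k, (∑ a ∈ D, w a ^ i) ^ cycleCount τ i := by
  simp_rw [prod_Icc_pow_cycleCount, ← sum_coe_sort D]
  exact (sum_sign_mul_prod_map_parts_partition_eq_sum_embedding fun a : D => w a).symm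

section Embedding

variable {α : Type*} [Fintype α] [DecidableEq α] {k : ℕ}

theorem card_filter_map_univ_eq_factorial {T : Finset α} (hT : #T = k) :
    #{g : Fin k ↪ α | univ.map g = T} = k ! := by
  have hiff (g : Fin k ↪ α) : univ.map g = T ↔ ∀ i, g i ∈ T := by
    refine ⟨fun h i => h ▸ mem_map_of_mem g (mem_univ i), fun h => ?_⟩
    refine eq_of_subset_of_card_le (fun x hx => ?_) (by simp [hT])
    obtain ⟨i, -, rfl⟩ := mem_map.1 hx
    exact h i
  simp_rw [hiff, ← Fintype.card_subtype]
  calc Fintype.card {g : Fin k ↪ α // ∀ i, g i ∈ T}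
      = Fintype.card (Fin k ↪ T) := Fintype.card_congr
        { toFun g := ⟨fun i => ⟨g.1 i, g.2 i⟩, fun i j h => g.1.injective (congrArg Subtype.val h)⟩
          invFun e := ⟨e.trans (.subtype _), fun i => (e i).2⟩
          left_inv _ := rfl
          right_inv _ := rfl }
    _ = k ! := by simp [Fintype.card_embedding_eq, hT, Nat.descFactorial_self]

theorem sum_embedding_map_univ_eq_factorial_smul {M : Type*} [AddCommMonoid M] (F : Finset α → M) :
    ∑ g : Fin k ↪ α, F (univ.map g) = k ! • ∑ T ∈ powersetCard k univ, F T := by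
  rw [← sum_fiberwise_of_maps_to (t := powersetCard k univ) (g := fun g => univ.map g)
    (fun g _ => by simp [mem_powersetCard]), smul_sum]
  refine sum_congr rfl fun T hT => ?_
  rw [sum_congr rfl fun g hg => congrArg F (mem_filter.1 hg).2, sum_const,
    card_filter_map_univ_eq_factorial (mem_powersetCard.1 hT).2]

end Embedding

theorem factorial_mul_card_filter_powersetCard {β M : Type*} [DecidableEq β] [AddCommMonoid M]
    [DecidableEq M] (D : Finset β) (f : β → M) (b : M) (k : ℕ) :
    k ! * #{S ∈ D.powersetCard k | ∑ x ∈ S, f x = b} = #{g : Fin k ↪ D | ∑ i, f (g i) = b} := by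
  have hD : D.powersetCard k
      = (univ.powersetCard k).map (mapEmbedding (.subtype (· ∈ D))).toEmbedding := by
    rw [← powersetCard_map, univ_eq_attach, attach_map_val]
  simp only [card_filter]
  rw [hD, sum_map, ← smul_eq_mul, ← sum_embedding_map_univ_eq_factorial_smul]
  refine sum_congr rfl fun g _ => ?_
  simp [sum_map]

theorem AddChar.map_sum_eq_prod {A M ι : Type*} [AddCommMonoid A] [CommMonoid M] (ψ : AddChar A M)
    (s : Finset ι) (g : ι → A) : ψ (∑ i ∈ s, g i) = ∏ i ∈ s, ψ (g i) := by
  classical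
  induction s using Finset.induction_on with
  | empty => simp
  | insert _ _ h ih => rw [sum_insert h, prod_insert h, AddChar.map_add_eq_mul, ih]

theorem card_filter_eq_sum_addChar {G ι : Type*} [AddCommGroup G] [Fintype G] [DecidableEq G]
    (s : Finset ι) (h : ι → G) (b : G) :
    (#{x ∈ s | h x = b} : ℂ)
      = (Fintype.card G : ℂ)⁻¹ * ∑ ψ : AddChar G ℂ, ψ (-b) * ∑ x ∈ s, ψ (h x) := by
  have hG : (Fintype.card G : ℂ) ≠ 0 := Nat.cast_ne_zero.2 Fintype.card_ne_zero
  calc (#{x ∈ s | h x = b} : ℂ)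
      = (Fintype.card G : ℂ)⁻¹ * ∑ x ∈ s, ∑ ψ : AddChar G ℂ, ψ (h x - b) := by
        simp_rw [AddChar.sum_apply_eq_ite, sub_eq_zero, ← sum_filter, sum_const, nsmul_eq_mul]
        field_simp
    _ = _ := by
        simp_rw [sum_comm (s := s), mul_sum, sub_eq_neg_add, AddChar.map_add_eq_mul]

open scoped Classical in
theorem char_sum_formula_polySubsetSum_general
    (R : Type*) [CommRing R] [Fintype R] [DecidableEq R]
    (D : Finset R) (m : ℕ) (hm : D.card = m)
    (f : Polynomial R) (b : R) (k : ℕ) :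
    (Nat.factorial k : ℂ) * (polySubsetSumCount D f k b : ℂ)
      = (1 / (Fintype.card R : ℂ)) * (∏ j ∈ Finset.range k, ((m : ℂ) - j))
        + (1 / (Fintype.card R : ℂ)) *
            ∑ ψ ∈ Finset.univ.filter (fun ψ : AddChar R ℂ => ψ ≠ 1),
              ψ (-b) *
                ∑ τ : Equiv.Perm (Fin k),
                  (Equiv.Perm.sign τ : ℂ) *
                    ∏ i ∈ Finset.Icc 1 k,
                      (∑ a ∈ D, ψ (i • f.eval a)) ^ (cycleCount τ i) := by
  have hcount : (k ! : ℂ) * polySubsetSumCount D f k b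
      = #{g : Fin k ↪ D | ∑ i, f.eval (g i : R) = b} := by
    exact_mod_cast factorial_mul_card_filter_powersetCard D f.eval b k
  have htriv : (1 : AddChar R ℂ) (-b) * ∑ g : Fin k ↪ D, (1 : AddChar R ℂ) (∑ i, f.eval (g i : R))
      = ∏ j ∈ range k, ((m : ℂ) - j) := by
    simp [Fintype.card_embedding_eq, hm, ← descPochhammer_eval_eq_prod_range,
      descPochhammer_eval_eq_descFactorial]
  have hchar (ψ : AddChar R ℂ) : ψ (-b) * ∑ g : Fin k ↪ D, ψ (∑ i, f.eval (g i : R))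
      = ψ (-b) * ∑ τ : Equiv.Perm (Fin k), (Equiv.Perm.sign τ : ℂ) *
          ∏ i ∈ Icc 1 k, (∑ a ∈ D, ψ (i • f.eval a)) ^ (cycleCount τ i) := by
    simp_rw [AddChar.map_sum_eq_prod, AddChar.map_nsmul_eq_pow,
      sum_embedding_prod_eq_sum_sign_mul_prod_cycleCount D (fun a => ψ (f.eval a))]
  rw [hcount, card_filter_eq_sum_addChar, ← add_sum_erase _ _ (mem_univ 1), htriv,
    sum_congr rfl fun ψ _ => hchar ψ, ← filter_ne', one_div, mul_add]

open scoped Classical in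
/-- **Lemma (character sum expression for `N_f(D,k,b)` over a finite commutative ring).**
`k!·N_f(D,k,b) = (1/q)(m)_k + (1/q)∑_{ψ ≠ ψ₀} ψ(-b) ∑_{τ ∈ S_k} sign(τ)
∏_{i=1}^{k} (∑_{a ∈ D} ψ(i·f(a)))^{c_i(τ)}`, where `q = |R|`, `m = |D|` and the outer sum
ranges over the nontrivial additive characters of `R`. -/
theorem char_sum_formula_polySubsetSum
    (R : Type*) [CommRing R] [Fintype R] [DecidableEq R]
    (D : Finset R) (m : ℕ) (hm : D.card = m)
    (f : Polynomial R) (b : R) (k : ℕ) (hk : k ≤ m) :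
    (Nat.factorial k : ℂ) * (polySubsetSumCount D f k b : ℂ)
      = (1 / (Fintype.card R : ℂ)) * (∏ j ∈ Finset.range k, ((m : ℂ) - j))
        + (1 / (Fintype.card R : ℂ)) *
            ∑ ψ ∈ Finset.univ.filter (fun ψ : AddChar R ℂ => ψ ≠ 1),
              ψ (-b) *
                ∑ τ : Equiv.Perm (Fin k),
                  (Equiv.Perm.sign τ : ℂ) *
                    ∏ i ∈ Finset.Icc 1 k,
                      (∑ a ∈ D, ψ (i • f.eval a)) ^ (cycleCount τ i) :=
  char_sum_formula_polySubsetSum_general R D m hm f b k
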